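/- Let u ∈ ℝ^L, let e_k ∈ ℝ^L denote the k-th cardinal basis vector (equal to 1 in its k-th entry and 0 elsewhere), and let A be a P×L real matrix satisfying the restricted isometry property of order ‖u‖₀ + 1 with isometry constant δ ∈ (0,1). Then for every index k ∈ {1, …, L}, |⟨Au, A e_k⟩ − u[k]| ≤ δ‖u‖₂, where u[k] denotes the k-th entry of u. -/

import Mathlib

/-- The number of nonzero entries (the "ℓ₀ norm") of a vector. -/
noncomputable def sparsity {L : ℕ} (x : Fin L → ℝ) : ℕ :=
  (Finset.univ.filter fun i => x i ≠ 0).card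

/-!
Polarization: for a linear map `T` between real inner product spaces, `a = ‖x‖` and `b = ‖y‖`,
the vectors `z± = b • x ± a • y` satisfy `‖T z₊‖² - ‖T z₋‖² = 4ab⟪Tx, Ty⟫` and
`‖z±‖² = 2a²b² ± 2ab⟪x, y⟫`, so the two-sided isometry bounds on `z±` pin `⟪Tx, Ty⟫` to within
`δab` of `⟪x, y⟫`. For `x = u` and `y = e_k` both `z±` have at most `‖u‖₀ + 1` nonzero entries,
so the restricted isometry property applies to them.
-/

open scoped InnerProductSpace

section RestrictedIsometry

variable {E F : Type*} [NormedAddCommGroup E] [InnerProductSpace ℝ E]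
  [NormedAddCommGroup F] [InnerProductSpace ℝ F]

theorem inner_map_map_sub_inner_le (T : E →ₗ[ℝ] F) {δ : ℝ} {x y : E}
    (hadd : ‖T (‖y‖ • x + ‖x‖ • y)‖ ^ 2 ≤ (1 + δ) * ‖‖y‖ • x + ‖x‖ • y‖ ^ 2)
    (hsub : (1 - δ) * ‖‖y‖ • x - ‖x‖ • y‖ ^ 2 ≤ ‖T (‖y‖ • x - ‖x‖ • y)‖ ^ 2) :
    ⟪T x, T y⟫_ℝ - ⟪x, y⟫_ℝ ≤ δ * (‖x‖ * ‖y‖) := by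
  rcases eq_or_ne x 0 with rfl | hx
  · simp
  rcases eq_or_ne y 0 with rfl | hy
  · simp
  have hxy : 0 < ‖x‖ * ‖y‖ := by positivity
  simp only [map_add, map_sub, map_smul, norm_add_sq_real, norm_sub_sq_real, norm_smul,
    real_inner_smul_left, real_inner_smul_right, Real.norm_eq_abs, abs_norm] at hadd hsub
  refine le_of_mul_le_mul_left ?_ hxy
  nlinarith

theorem abs_inner_map_map_sub_inner_le (T : E →ₗ[ℝ] F) {δ : ℝ} {x y : E}
    (hadd : (1 - δ) * ‖‖y‖ • x + ‖x‖ • y‖ ^ 2 ≤ ‖T (‖y‖ • x + ‖x‖ • y)‖ ^ 2 ∧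
      ‖T (‖y‖ • x + ‖x‖ • y)‖ ^ 2 ≤ (1 + δ) * ‖‖y‖ • x + ‖x‖ • y‖ ^ 2)
    (hsub : (1 - δ) * ‖‖y‖ • x - ‖x‖ • y‖ ^ 2 ≤ ‖T (‖y‖ • x - ‖x‖ • y)‖ ^ 2 ∧
      ‖T (‖y‖ • x - ‖x‖ • y)‖ ^ 2 ≤ (1 + δ) * ‖‖y‖ • x - ‖x‖ • y‖ ^ 2) :
    |⟪T x, T y⟫_ℝ - ⟪x, y⟫_ℝ| ≤ δ * (‖x‖ * ‖y‖) := by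
  have hneg := inner_map_map_sub_inner_le T (y := -y) (by simpa [← sub_eq_add_neg] using hsub.2)
    (by simpa [← sub_eq_add_neg] using hadd.1)
  simp only [map_neg, inner_neg_right, norm_neg] at hneg
  exact abs_sub_le_iff.2 ⟨inner_map_map_sub_inner_le T hadd.2 hsub.1, by linarith⟩

end RestrictedIsometry

theorem sparsity_smul_add_smul_single_le {L : ℕ} (x : Fin L → ℝ) (k : Fin L) (a b : ℝ) :
    sparsity (a • x + b • Pi.single k 1) ≤ sparsity x + 1 := by
  refine (Finset.card_le_card fun i hi => ?_).trans (Finset.card_insert_le k _)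
  by_cases hik : i = k
  · simp [hik]
  · simp_all

theorem rip_inner_product_basis_estimate_general {P L : ℕ}
    (A : Matrix (Fin P) (Fin L) ℝ) (u : Fin L → ℝ) (δ : ℝ)
    (hRIP : ∀ η : Fin L → ℝ,
      sparsity η ≤ sparsity u + 1 →
      (1 - δ) * ∑ i, η i ^ 2 ≤ ∑ k, (A.mulVec η k) ^ 2 ∧
        ∑ k, (A.mulVec η k) ^ 2 ≤ (1 + δ) * ∑ i, η i ^ 2) :
    ∀ k : Fin L,
      |(∑ j, A.mulVec u j * A.mulVec (Pi.single k 1) j) - u k| ≤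
        δ * Real.sqrt (∑ i, u i ^ 2) := by
  intro k
  set T := Matrix.toLpLin 2 2 A
  have hRIP_T (a b : ℝ) (z : EuclideanSpace ℝ (Fin L))
      (hz : z = WithLp.toLp 2 (a • u + b • Pi.single k 1)) :
      (1 - δ) * ‖z‖ ^ 2 ≤ ‖T z‖ ^ 2 ∧ ‖T z‖ ^ 2 ≤ (1 + δ) * ‖z‖ ^ 2 := by
    subst hz
    simpa only [EuclideanSpace.real_norm_sq_eq, T, Matrix.toLpLin_apply]
      using hRIP _ (sparsity_smul_add_smul_single_le u k a b)
  set x : EuclideanSpace ℝ (Fin L) := WithLp.toLp 2 u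
  set y : EuclideanSpace ℝ (Fin L) := WithLp.toLp 2 (Pi.single k 1)
  have key := abs_inner_map_map_sub_inner_le T (hRIP_T ‖y‖ ‖x‖ _ rfl)
    (hRIP_T ‖y‖ (-‖x‖) _ (by rw [neg_smul, ← sub_eq_add_neg]; rfl))
  have hTxy : ⟪T x, T y⟫_ℝ = ∑ j, A.mulVec u j * A.mulVec (Pi.single k 1) j := by
    simp [T, x, y, Matrix.toLpLin_apply, EuclideanSpace.inner_eq_star_dotProduct, dotProduct,
      mul_comm]
  have hxy : ⟪x, y⟫_ℝ = u k := by simp [x, y, EuclideanSpace.inner_eq_star_dotProduct]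
  have hx : ‖x‖ = Real.sqrt (∑ i, u i ^ 2) := by simp [x, EuclideanSpace.norm_eq]
  have hy : ‖y‖ = 1 := by simp [y]
  rwa [hTxy, hxy, hx, hy, mul_one] at key

/-- If a `P × L` real matrix `A` satisfies the restricted isometry
property of order `‖u‖₀ + 1` with isometry constant `δ ∈ (0,1)`, then for every
cardinal basis vector `e_k`, `|⟨Au, A e_k⟩ − u k| ≤ δ ‖u‖₂`. -/
theorem rip_inner_product_basis_estimate {P L : ℕ}
    (A : Matrix (Fin P) (Fin L) ℝ) (u : Fin L → ℝ) (δ : ℝ)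
    (hδ0 : 0 < δ) (hδ1 : δ < 1)
    (hRIP : ∀ η : Fin L → ℝ,
      sparsity η ≤ sparsity u + 1 →
      (1 - δ) * ∑ i, η i ^ 2 ≤ ∑ k, (A.mulVec η k) ^ 2 ∧
        ∑ k, (A.mulVec η k) ^ 2 ≤ (1 + δ) * ∑ i, η i ^ 2) :
    ∀ k : Fin L,
      |(∑ j, A.mulVec u j * A.mulVec (Pi.single k 1) j) - u k| ≤
        δ * Real.sqrt (∑ i, u i ^ 2) :=
  rip_inner_product_basis_estimate_general A u δ hRIP
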